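/- arXiv:2211.05835 — 3 statements merged into one kernel-verified Lean document; each statement's English description precedes it below -/
import Mathlib

section
/- Let r₁, r₂ : [0,T) → ℝ be differentiable with r₁ increasing and positive, r₂ decreasing and positive on (0,T), and suppose r₂(t) → 0, r₁(t)·r₂(t) stays bounded, and r₁(t)/r₂(t) → ∞ as t → T. If additionally 0 ≤ r₁'(t)/|r₂'(t)| ≤ r₁(t)/r₂(t) for t near T and r₁(t) r₂(t) → L ∈ ℝ as t → T, then r₁'(t) r₂(t)² / (r₁'(t) r₂(t) − r₁(t) r₂'(t)) → 0 as t → T. -/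
open Set Filter

/-! Near `T` we have `r₂' ≤ 0` because `r₂` decreases, and then `r₁' ≥ 0` wherever `r₂' ≠ 0`; this
squeezes the quotient between `0` and `r₂ t`, which tends to `0`. -/

/-- The upper bound amounts to `0 ≤ -a b b'`. When `b' = 0` the hypothesis on `a' / |b'|` says
nothing (`x / 0 = 0`), but then the quotient is `b` or `0`. -/
lemma mul_sq_div_mul_sub_mul_mem_Icc {a b a' b' : ℝ} (ha : 0 < a) (hb : 0 < b) (hb' : b' ≤ 0)
    (ha' : 0 ≤ a' / |b'|) : a' * b ^ 2 / (a' * b - a * b') ∈ Icc 0 b := by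
  rcases hb'.lt_or_eq with hb'_neg | rfl
  · have ha'_nonneg : 0 ≤ a' := by
      simpa [abs_of_neg hb'_neg, div_nonneg_iff, hb'_neg.not_ge, hb'_neg.le] using ha'
    have hden : 0 < a' * b - a * b' := by nlinarith [mul_nonneg ha'_nonneg hb.le]
    refine ⟨by positivity, ?_⟩
    rw [div_le_iff₀ hden]
    nlinarith [mul_pos ha hb]
  · rcases eq_or_ne a' 0 with rfl | ha'_ne
    · simp [hb.le]
    · have : a' * b ^ 2 / (a' * b - a * 0) = b := by
        rw [mul_zero, sub_zero, sq, ← mul_assoc, mul_div_cancel_left₀ b (mul_ne_zero ha'_ne hb.ne')]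
      rw [this]
      exact ⟨hb.le, le_rfl⟩

theorem covariance_factorization_limit_general
    (T : ℝ) (hT : 0 < T) (r₁ r₂ r₁' r₂' : ℝ → ℝ)
    (hd₂ : ∀ t ∈ Ico (0 : ℝ) T, HasDerivAt r₂ (r₂' t) t)
    (h₁pos : ∀ t ∈ Ioo (0 : ℝ) T, 0 < r₁ t)
    (h₂anti : StrictAntiOn r₂ (Ioo 0 T))
    (h₂pos : ∀ t ∈ Ioo (0 : ℝ) T, 0 < r₂ t)
    (h₂lim : Tendsto r₂ (nhdsWithin T (Iio T)) (nhds 0))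
    (hderiv_ratio : ∀ᶠ t in nhdsWithin T (Iio T),
      0 ≤ r₁' t / |r₂' t| ∧ r₁' t / |r₂' t| ≤ r₁ t / r₂ t) :
    Tendsto (fun t => r₁' t * (r₂ t) ^ 2 / (r₁' t * r₂ t - r₁ t * r₂' t))
      (nhdsWithin T (Iio T)) (nhds 0) := by
  have h_bounds : ∀ᶠ t in nhdsWithin T (Iio T),
      r₁' t * r₂ t ^ 2 / (r₁' t * r₂ t - r₁ t * r₂' t) ∈ Icc 0 (r₂ t) := by
    filter_upwards [Ioo_mem_nhdsLT hT, hderiv_ratio] with t ht hratio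
    have hr₂'_nonpos : r₂' t ≤ 0 :=
      (hd₂ t (Ioo_subset_Ico_self ht)).hasDerivWithinAt.nonpos_of_antitoneOn
        (uniqueDiffOn_Ioo 0 T t ht).accPt h₂anti.antitoneOn
    exact mul_sq_div_mul_sub_mul_mem_Icc (h₁pos t ht) (h₂pos t ht) hr₂'_nonpos hratio.1
  exact tendsto_of_tendsto_of_tendsto_of_le_of_le' tendsto_const_nhds h₂lim
    (h_bounds.mono fun _ h => h.1) (h_bounds.mono fun _ h => h.2)

/-- Limit computation showing `lim_{s→∞} a₂'(s)·s = 0` expressed in terms of the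
covariance factorization `r₁, r₂` of a Gauss–Markov bridge:
`r₁' r₂² / (r₁' r₂ − r₁ r₂') → 0` as `t → T⁻`. -/
theorem covariance_factorization_limit
    (T : ℝ) (hT : 0 < T) (r₁ r₂ r₁' r₂' : ℝ → ℝ)
    (hd₁ : ∀ t ∈ Ico (0 : ℝ) T, HasDerivAt r₁ (r₁' t) t)
    (hd₂ : ∀ t ∈ Ico (0 : ℝ) T, HasDerivAt r₂ (r₂' t) t)
    (h₁mono : StrictMonoOn r₁ (Ioo 0 T))
    (h₁pos : ∀ t ∈ Ioo (0 : ℝ) T, 0 < r₁ t)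
    (h₂anti : StrictAntiOn r₂ (Ioo 0 T))
    (h₂pos : ∀ t ∈ Ioo (0 : ℝ) T, 0 < r₂ t)
    (h₂lim : Tendsto r₂ (nhdsWithin T (Iio T)) (nhds 0))
    (hbdd : ∃ M : ℝ, ∀ t ∈ Ioo (0 : ℝ) T, |r₁ t * r₂ t| ≤ M)
    (hratio : Tendsto (fun t => r₁ t / r₂ t) (nhdsWithin T (Iio T)) atTop)
    (hderiv_ratio : ∀ᶠ t in nhdsWithin T (Iio T),
      0 ≤ r₁' t / |r₂' t| ∧ r₁' t / |r₂' t| ≤ r₁ t / r₂ t)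
    (L : ℝ)
    (hprod : Tendsto (fun t => r₁ t * r₂ t) (nhdsWithin T (Iio T)) (nhds L)) :
    Tendsto (fun t => r₁' t * (r₂ t) ^ 2 / (r₁' t * r₂ t - r₁ t * r₂' t))
      (nhdsWithin T (Iio T)) (nhds 0) :=
  covariance_factorization_limit_general T hT r₁ r₂ r₁' r₂' hd₂ h₁pos h₂anti h₂pos h₂lim
    hderiv_ratio
end

section
/- Let b : [0,∞) → ℝ be locally Lipschitz, s ≥ 0, and let Y be a standard Brownian motion started at Y_s = b(s) at time s. Then almost surely, inf{u > 0 : Y_{s+u} > b(s+u)} = 0; that is, the process immediately crosses above the boundary b. -/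
open MeasureTheory ProbabilityTheory

/-- A standard Brownian motion on a probability space. -/
structure IsStandardBM {Ω : Type*} [MeasurableSpace Ω] (μ : Measure Ω)
    (Y : ℝ → Ω → ℝ) : Prop where
  meas : ∀ t, Measurable (Y t)
  init : ∀ᵐ ω ∂μ, Y 0 ω = 0
  cont : ∀ᵐ ω ∂μ, Continuous fun t => Y t ω
  incr_law : ∀ s t : ℝ, 0 ≤ s → s ≤ t →
    μ.map (fun ω => Y t ω - Y s ω) = gaussianReal 0 (Real.toNNReal (t - s))
  indep_incr : ∀ s t u v : ℝ, 0 ≤ s → s ≤ t → t ≤ u → u ≤ v →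
    IndepFun (fun ω => Y t ω - Y s ω) (fun ω => Y v ω - Y u ω) μ

/-!
Along the times `t n = 2⁻¹ ^ n²`, the increments `B (t n) - B (t (n + 1))` normalised by their
standard deviation are identically distributed standard Gaussians. They are only known to be
pairwise independent, so Etemadi's strong law, not the second Borel–Cantelli lemma, shows that
infinitely many of them exceed `1`. Chebyshev and the first Borel–Cantelli lemma make
`|B (t (n + 1))| < √(t n) / 4` eventually, hence `B (t n) > √(t n) / 4` infinitely often, while
near `s` the Lipschitz bound gives `b (s + u) - b s ≤ K u = o(√u)`.
-/

open Filter Topology Set Finset Function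

namespace ProbabilityTheory

variable {Ω : Type*} [MeasurableSpace Ω] {μ : Measure Ω}

lemma measure_le_abs_le_of_hasLaw_gaussianReal {X : Ω → ℝ} {v : NNReal}
    (hX : HasLaw X (gaussianReal 0 v) μ) {c : ℝ} (hc : 0 < c) :
    μ {ω | c ≤ |X ω|} ≤ ENNReal.ofReal (v / c ^ 2) := by
  rw [hX.measure_eq (p := fun x => c ≤ |x|) (measurableSet_le measurable_const (by fun_prop))]
  simpa [integral_id_gaussianReal, variance_id_gaussianReal] using
    meas_ge_le_variance_div_sq (memLp_id_gaussianReal (μ := 0) (v := v) 2) hc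

theorem ae_frequently_mem_of_pairwise_indepFun_identDistrib [IsFiniteMeasure μ]
    {E : Type*} [MeasurableSpace E] {X : ℕ → Ω → E} (hindep : Pairwise ((· ⟂ᵢ[μ] ·) on X))
    (hident : ∀ i, IdentDistrib (X i) (X 0) μ μ) {S : Set E} (hS : MeasurableSet S)
    (hpos : μ.map (X 0) S ≠ 0) :
    ∀ᵐ ω ∂μ, ∃ᶠ n in atTop, X n ω ∈ S := by
  set Y : ℕ → Ω → ℝ := fun n ω => S.indicator 1 (X n ω)
  have hf : Measurable (S.indicator (1 : E → ℝ)) := measurable_const.indicator hS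
  have hX0 : AEMeasurable (X 0) μ := (hident 0).aemeasurable_fst
  have hY0 : μ[Y 0] = (μ.map (X 0)).real S := by
    rw [← integral_indicator_one hS, integral_map hX0 hf.aestronglyMeasurable]
  have hint : Integrable (Y 0) μ :=
    (integrable_map_measure hf.aestronglyMeasurable hX0).1
      ((integrable_const (1 : ℝ)).indicator hS)
  filter_upwards [strong_law_ae Y hint (fun i j hij => (hindep hij).comp hf hf)
    (fun i => (hident i).comp hf)] with ω hω
  by_contra hfin
  obtain ⟨N, hN⟩ := eventually_atTop.1 (not_frequently.1 hfin)
  have hsum : ∀ n ≥ N, ∑ i ∈ range n, Y i ω = ∑ i ∈ range N, Y i ω := by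
    intro n hn
    rw [← sum_range_add_sum_Ico _ hn, sum_eq_zero (s := Ico N n) fun i hi => ?_, add_zero]
    simp [Y, hN i (Finset.mem_Ico.1 hi).1]
  have hlim : Tendsto (fun n : ℕ => (n : ℝ)⁻¹ • ∑ i ∈ range n, Y i ω) atTop (𝓝 0) := by
    refine (tendsto_const_div_atTop_nhds_zero_nat (∑ i ∈ range N, Y i ω)).congr' ?_
    filter_upwards [eventually_ge_atTop N] with n hn
    rw [hsum n hn, smul_eq_mul, inv_mul_eq_div]
  rw [tendsto_nhds_unique hω hlim, eq_comm, measureReal_eq_zero_iff] at hY0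
  exact hpos hY0

end ProbabilityTheory

namespace IsStandardBM

variable {Ω : Type*} [MeasurableSpace Ω] {μ : Measure Ω} {B : ℝ → Ω → ℝ}

lemma hasLaw_sub (hB : IsStandardBM μ B) {s t : ℝ} (hs : 0 ≤ s) (hst : s ≤ t) :
    HasLaw (fun ω => B t ω - B s ω) (gaussianReal 0 (t - s).toNNReal) μ :=
  ⟨((hB.meas t).sub (hB.meas s)).aemeasurable, hB.incr_law s t hs hst⟩

lemma hasLaw (hB : IsStandardBM μ B) {t : ℝ} (ht : 0 ≤ t) :
    HasLaw (B t) (gaussianReal 0 t.toNNReal) μ := by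
  simpa using (hB.hasLaw_sub le_rfl ht).congr (by filter_upwards [hB.init] with ω h0; simp [h0])

lemma isProbabilityMeasure (hB : IsStandardBM μ B) : IsProbabilityMeasure μ :=
  (hB.hasLaw_sub le_rfl le_rfl).isProbabilityMeasure

lemma ae_eventually_abs_lt (hB : IsStandardBM μ B) {t c : ℕ → ℝ} (ht : ∀ n, 0 ≤ t n)
    (hc : ∀ n, 0 < c n) (hsum : Summable fun n => t n / c n ^ 2) :
    ∀ᵐ ω ∂μ, ∀ᶠ n in atTop, |B (t n) ω| < c n := by
  have hbound : ∀ n, μ {ω | c n ≤ |B (t n) ω|} ≤ ENNReal.ofReal (t n / c n ^ 2) := fun n => by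
    simpa [Real.coe_toNNReal _ (ht n)] using
      measure_le_abs_le_of_hasLaw_gaussianReal (hB.hasLaw (ht n)) (hc n)
  have hfin : ∑' n, μ {ω | c n ≤ |B (t n) ω|} ≠ ⊤ := by
    refine ne_top_of_le_ne_top ?_ (ENNReal.tsum_le_tsum hbound)
    rw [← ENNReal.ofReal_tsum_of_nonneg (fun n => by have := ht n; positivity) hsum]
    exact ENNReal.ofReal_ne_top
  filter_upwards [ae_eventually_notMem hfin] with ω hω
  simpa using hω

lemma ae_frequently_sqrt_lt_sub (hB : IsStandardBM μ B) {t : ℕ → ℝ} (ht : StrictAnti t)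
    (ht0 : ∀ n, 0 ≤ t n) :
    ∀ᵐ ω ∂μ, ∃ᶠ n in atTop, √(t n - t (n + 1)) < B (t n) ω - B (t (n + 1)) ω := by
  have hv : ∀ n, 0 < t n - t (n + 1) := fun n => sub_pos.2 (ht n.lt_succ_self)
  set σ : ℕ → ℝ := fun n => √(t n - t (n + 1))
  have hσ : ∀ n, 0 < σ n := fun n => Real.sqrt_pos.2 (hv n)
  set Z : ℕ → Ω → ℝ := fun n ω => (B (t n) ω - B (t (n + 1)) ω) / σ n
  have hZ : ∀ n, HasLaw (Z n) (gaussianReal 0 1) μ := by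
    intro n
    convert gaussianReal_div_const (hB.hasLaw_sub (ht0 (n + 1)) (ht.antitone n.le_succ)) (σ n)
      using 2
    · simp
    · ext
      simp [σ, Real.sq_sqrt (hv n).le, max_eq_left (hv n).le, (hv n).ne']
  have hindep : Pairwise ((· ⟂ᵢ[μ] ·) on Z) := by
    have hlt : ∀ i j, i < j → Z i ⟂ᵢ[μ] Z j := fun i j hij =>
      (hB.indep_incr (t (j + 1)) (t j) (t (i + 1)) (t i) (ht0 _) (ht.antitone j.le_succ)
        (ht.antitone hij) (ht.antitone i.le_succ)).symm.comp
        (measurable_id.div_const _) (measurable_id.div_const _)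
    intro i j hij
    rcases hij.lt_or_gt with h | h
    · exact hlt i j h
    · exact (hlt j i h).symm
  have hpos : μ.map (Z 0) (Ioi 1) ≠ 0 := fun h => by
    rw [(hZ 0).map_eq] at h
    simpa using gaussianReal_absolutelyContinuous' 0 one_ne_zero h
  have := hB.isProbabilityMeasure
  filter_upwards [ae_frequently_mem_of_pairwise_indepFun_identDistrib hindep
    (fun i => (hZ i).identDistrib (hZ 0)) measurableSet_Ioi hpos] with ω hω
  exact hω.mono fun n hn => by simpa [Z, lt_div_iff₀ (hσ n)] using hn

lemma ae_frequently_sqrt_div_four_lt (hB : IsStandardBM μ B) {t : ℕ → ℝ} (ht0 : ∀ n, 0 < t n)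
    (hhalf : ∀ n, t (n + 1) ≤ t n / 2) (hsum : Summable fun n => t (n + 1) / t n) :
    ∀ᵐ ω ∂μ, ∃ᶠ n in atTop, √(t n) / 4 < B (t n) ω := by
  have ht : StrictAnti t := strictAnti_nat_of_succ_lt fun n => by linarith [hhalf n, ht0 n]
  have hsum' : Summable fun n => t (n + 1) / (√(t n) / 4) ^ 2 := by
    refine (hsum.mul_left 16).congr fun n => ?_
    rw [div_pow, Real.sq_sqrt (ht0 n).le]
    ring
  filter_upwards [hB.ae_frequently_sqrt_lt_sub ht fun n => (ht0 n).le,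
    hB.ae_eventually_abs_lt (t := fun n => t (n + 1)) (fun n => (ht0 _).le)
      (fun n => by have := ht0 n; positivity) hsum'] with ω hfreq hsmall
  refine (hfreq.and_eventually hsmall).mono fun n ⟨hincr, habs⟩ => ?_
  have hσ : √(t n) / 2 ≤ √(t n - t (n + 1)) := Real.le_sqrt_of_sq_le <| by
    rw [div_pow, Real.sq_sqrt (ht0 n).le]
    linarith [hhalf n, ht0 n]
  linarith [neg_abs_le (B (t (n + 1)) ω)]

end IsStandardBM

lemma LocallyLipschitz.eventually_le_add_mul_sqrt {b : ℝ → ℝ} (hb : LocallyLipschitz b) (s : ℝ)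
    {c : ℝ} (hc : 0 < c) : ∀ᶠ u in 𝓝[>] 0, b (s + u) ≤ b s + c * √u := by
  obtain ⟨K, U, hU, hK⟩ := hb s
  have hmem : ∀ᶠ u in 𝓝 0, s + u ∈ U :=
    (continuous_const_add s).tendsto' 0 s (add_zero s) hU
  have hsmall : ∀ᶠ u in 𝓝 0, K * √u < c := by
    refine ((continuous_const.mul Real.continuous_sqrt).tendsto' 0 0 ?_).eventually_lt_const hc
    simp
  filter_upwards [nhdsWithin_le_nhds hmem, nhdsWithin_le_nhds hsmall, self_mem_nhdsWithin]
    with u hu hKu (hu0 : 0 < u)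
  have hlip : b (s + u) - b s ≤ K * u := by
    simpa [Real.dist_eq, abs_of_pos hu0] using
      (le_abs_self _).trans (hK.dist_le_mul _ hu s (mem_of_mem_nhds hU))
  calc b (s + u) ≤ b s + K * √u * √u := by rw [mul_assoc, Real.mul_self_sqrt hu0.le]; linarith
    _ ≤ b s + c * √u := by gcongr

theorem exists_seq_tendsto_nhdsGT_zero_summable_ratio :
    ∃ t : ℕ → ℝ, Tendsto t atTop (𝓝[>] 0) ∧ (∀ n, 0 < t n) ∧ (∀ n, t (n + 1) ≤ t n / 2) ∧
      Summable fun n => t (n + 1) / t n := by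
  have hratio : ∀ n : ℕ, (2⁻¹ : ℝ) ^ ((n + 1) ^ 2) / 2⁻¹ ^ (n ^ 2) = 2⁻¹ ^ (2 * n + 1) := by
    intro n
    rw [div_eq_iff (by positivity), ← pow_add]
    ring_nf
  refine ⟨fun n => (2⁻¹ : ℝ) ^ (n ^ 2), ?_, fun n => by positivity, fun n => ?_, ?_⟩
  · exact tendsto_nhdsWithin_iff.2 ⟨(tendsto_pow_atTop_nhds_zero_of_lt_one (by norm_num)
      (by norm_num)).comp (tendsto_pow_atTop two_ne_zero),
      .of_forall fun n => mem_Ioi.2 (by positivity)⟩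
  · have := pow_le_pow_of_le_one (a := (2⁻¹ : ℝ)) (by norm_num) (by norm_num)
      (Nat.le_add_left 1 (2 * n))
    rw [← hratio, pow_one, div_le_iff₀ (by positivity)] at this
    linarith
  · refine .of_nonneg_of_le (fun n => by positivity) (fun n => ?_) summable_geometric_two
    rw [hratio, one_div]
    exact pow_le_pow_of_le_one (by norm_num) (by norm_num) (by omega)

theorem bm_immediately_crosses_lipschitz_boundary_general
    {Ω : Type*} [MeasurableSpace Ω] (μ : Measure Ω)
    (B : ℝ → Ω → ℝ) (hB : IsStandardBM μ B)
    (b : ℝ → ℝ) (hb : LocallyLipschitz b) (s : ℝ) :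
    ∀ᵐ ω ∂μ, ∀ ε : ℝ, 0 < ε →
      ∃ u : ℝ, 0 < u ∧ u < ε ∧ b s + B u ω > b (s + u) := by
  obtain ⟨t, ht_lim, ht_pos, ht_half, ht_sum⟩ := exists_seq_tendsto_nhdsGT_zero_summable_ratio
  filter_upwards [hB.ae_frequently_sqrt_div_four_lt ht_pos ht_half ht_sum] with ω hω ε hε
  have hsmall := ht_lim.eventually
    ((hb.eventually_le_add_mul_sqrt s (c := 1 / 4) (by norm_num)).and (Ioo_mem_nhdsGT hε))
  obtain ⟨n, hcross, hlip, hpos, hlt⟩ := (hω.and_eventually hsmall).exists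
  exact ⟨t n, hpos, hlt, by linarith⟩

/-- Brownian motion started on a locally Lipschitz boundary immediately crosses
above it: a.s., for every `ε > 0` there is `0 < u < ε` with
`b(s) + B_u > b(s + u)`; i.e. `inf{u > 0 : Y_{s+u} > b(s+u)} = 0`. -/
theorem bm_immediately_crosses_lipschitz_boundary
    {Ω : Type*} [MeasurableSpace Ω] (μ : Measure Ω) [IsProbabilityMeasure μ]
    (B : ℝ → Ω → ℝ) (hB : IsStandardBM μ B)
    (b : ℝ → ℝ) (hb : LocallyLipschitz b) (s : ℝ) (hs : 0 ≤ s) :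
    ∀ᵐ ω ∂μ, ∀ ε : ℝ, 0 < ε →
      ∃ u : ℝ, 0 < u ∧ u < ε ∧ b s + B u ω > b (s + u) :=
  bm_immediately_crosses_lipschitz_boundary_general μ B hB b hb s
end

section
/- Let β_T, γ_T satisfy β_T(t) > 0 on [0,T), γ_T strictly increasing with γ_T(0) = 0, γ_T(t) → ∞ and β_T(t)·γ_T(t) → 1 as t → T, and let B be a standard Brownian motion. Then the process X_t = α(t) + β_T(t)·((z − α(T))·γ_T(t) + B_{γ_T(t)} + (x − α(0))/β_T(0)) for t ∈ [0,T), where α is continuous on [0,T], converges almost surely to z as t → T. -/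
/-!
Writing `c = (x - α 0) / β 0`, the process is
`X t = α t + (β t γ t) (z - α T) + (β t γ t) (B (γ t) / γ t) + β t c`,
and `β = (β γ) / γ → 0`; so everything reduces to `B s = o(s)` almost surely as `s → ∞`.
That growth bound comes from chaining: Gaussian tails of the increments and Borel–Cantelli show
that almost surely, for all large `n`, every increment of `B` over a level-`k` dyadic subinterval
of `[0, 2ⁿ]` is at most `δ 2ⁿ (7/8)ᵏ`, and summing over the levels bounds `|B|` on `[0, 2ⁿ]`
by `8 δ 2ⁿ`.
-/

open MeasureTheory ProbabilityTheory Filter Set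

open Real
open scoped NNReal Topology

lemma ProbabilityTheory.hasSubgaussianMGF_id_gaussianReal (v : ℝ≥0) :
    HasSubgaussianMGF id v (gaussianReal 0 v) where
  integrable_exp_mul t := integrable_exp_mul_gaussianReal t
  mgf_le t := by simp [mgf_id_gaussianReal]

lemma ProbabilityTheory.HasSubgaussianMGF.measureReal_abs_ge_le {Ω : Type*} [MeasurableSpace Ω]
    {μ : Measure Ω} [IsFiniteMeasure μ] {X : Ω → ℝ} {c : ℝ≥0} (h : HasSubgaussianMGF X c μ)
    {ε : ℝ} (hε : 0 ≤ ε) : μ.real {ω | ε ≤ |X ω|} ≤ 2 * exp (-ε ^ 2 / (2 * c)) := by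
  have hsub : {ω | ε ≤ |X ω|} ⊆ {ω | ε ≤ X ω} ∪ {ω | ε ≤ (-X) ω} :=
    fun ω (hω : ε ≤ |X ω|) => le_abs.1 hω
  calc μ.real {ω | ε ≤ |X ω|} ≤ μ.real ({ω | ε ≤ X ω} ∪ {ω | ε ≤ (-X) ω}) := measureReal_mono hsub
    _ ≤ _ := (measureReal_union_le _ _).trans <| by
      linarith [h.measure_ge_le hε, h.neg.measure_ge_le hε]

lemma ae_eventually_cofinite_notMem_of_summable {α ι : Type*} [MeasurableSpace α]
    {μ : Measure α} [IsFiniteMeasure μ] [Countable ι] {s : ι → Set α} {f : ι → ℝ}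
    (hf : Summable f) (hs : ∀ i, μ.real (s i) ≤ f i) : ∀ᵐ x ∂μ, ∀ᶠ i in cofinite, x ∉ s i := by
  have hsum : ∑' i, μ (s i) ≠ ⊤ := ne_top_of_le_ne_top hf.tsum_ofReal_ne_top <|
    ENNReal.tsum_le_tsum fun i => by
      rw [← ofReal_measureReal]
      exact ENNReal.ofReal_le_ofReal (hs i)
  filter_upwards [ae_finite_setOfPred_mem hsum] with x hx
  exact eventually_cofinite.2 (by simpa only [not_not] using hx)

lemma exists_forall_ge_of_eventually_cofinite_prod {P : ℕ × ℕ → Prop}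
    (h : ∀ᶠ p in cofinite, P p) : ∃ N, ∀ n ≥ N, ∀ k, P (n, k) := by
  rw [← coprod_cofinite] at h
  obtain ⟨N, hN⟩ := eventually_atTop.1 <|
    Nat.cofinite_eq_atTop ▸ eventually_comap.1 (h.filter_mono le_sup_left)
  exact ⟨N, fun n hn k => hN n hn (n, k) rfl⟩

lemma Real.exp_neg_le_two_div_sq {y : ℝ} (hy : 0 < y) : exp (-y) ≤ 2 / y ^ 2 := by
  rw [exp_neg, inv_le_comm₀ (exp_pos y) (by positivity), inv_div]
  linarith [quadratic_le_exp_of_nonneg hy.le]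

lemma summable_two_pow_mul_exp_neg_mul_two_pow_mul_pow {c ρ : ℝ} (hc : 0 < c) (hρ₀ : 0 < ρ)
    (hρ : 2 < ρ ^ 2) :
    Summable fun p : ℕ × ℕ => (2 : ℝ) ^ p.2 * exp (-(c * 2 ^ p.1 * ρ ^ p.2)) := by
  have hgeom : Summable fun p : ℕ × ℕ => (2 / c ^ 2 * (1 / 4) ^ p.1) * (2 / ρ ^ 2) ^ p.2 :=
    ((summable_geometric_of_lt_one (by norm_num) (by norm_num)).mul_left _).mul_of_nonneg
      (summable_geometric_of_lt_one (by positivity) ((div_lt_one (by positivity)).2 hρ))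
      (fun _ => by positivity) (fun _ => by positivity)
  refine hgeom.of_nonneg_of_le (fun _ => by positivity) fun ⟨n, k⟩ => ?_
  calc (2 : ℝ) ^ k * exp (-(c * 2 ^ n * ρ ^ k)) ≤ 2 ^ k * (2 / (c * 2 ^ n * ρ ^ k) ^ 2) := by
        gcongr
        exact exp_neg_le_two_div_sq (by positivity)
    _ = (2 / c ^ 2 * (1 / 4) ^ n) * (2 / ρ ^ 2) ^ k := by
        rw [mul_pow, mul_pow, ← pow_mul, ← pow_mul, div_pow, div_pow, one_pow, mul_comm k,
          mul_comm n, pow_mul, pow_mul]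
        field_simp
        norm_num

section Chaining

variable {f : ℝ → ℝ} {a : ℕ → ℝ}

lemma abs_sub_le_sum_of_dyadic_increments (ha : ∀ k, 0 ≤ a k)
    (h : ∀ k j : ℕ, j < 2 ^ k → |f ((j + 1) / 2 ^ k) - f (j / 2 ^ k)| ≤ a k) (m j : ℕ)
    (hj : j ≤ 2 ^ m) : |f (j / 2 ^ m) - f 0| ≤ ∑ k ∈ Finset.range (m + 1), a k := by
  induction m generalizing j with
  | zero =>
    interval_cases j
    · simpa using ha 0
    · simpa using h 0 0 one_pos
  | succ m ih =>
    have hmid (i : ℕ) (hi : 2 * i ≤ 2 ^ (m + 1)) :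
        |f (2 * i / 2 ^ (m + 1)) - f 0| ≤ ∑ k ∈ Finset.range (m + 1), a k := by
      rw [show (2 * i / 2 ^ (m + 1) : ℝ) = i / 2 ^ m by field_simp; ring]
      exact ih i (by omega)
    rw [Finset.sum_range_succ]
    obtain ⟨i, rfl | rfl⟩ := Nat.even_or_odd' j
    · push_cast
      linarith [hmid i hj, ha (m + 1)]
    · have hstep := h (m + 1) (2 * i) (by omega)
      push_cast at hstep ⊢
      linarith [abs_sub_le (f ((2 * i + 1) / 2 ^ (m + 1))) (f (2 * i / 2 ^ (m + 1))) (f 0),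
        hmid i (by omega)]

lemma abs_sub_le_tsum_of_dyadic_increments (hf : Continuous f) (ha : ∀ k, 0 ≤ a k)
    (has : Summable a) (h : ∀ k j : ℕ, j < 2 ^ k → |f ((j + 1) / 2 ^ k) - f (j / 2 ^ k)| ≤ a k)
    {t : ℝ} (ht : t ∈ Icc (0 : ℝ) 1) : |f t - f 0| ≤ ∑' k, a k := by
  set x : ℕ → ℝ := fun m => ⌊t * 2 ^ m⌋₊ / 2 ^ m
  have hx_le (m : ℕ) : x m ≤ t :=
    (div_le_iff₀ (by positivity)).2 (Nat.floor_le (mul_nonneg ht.1 (by positivity)))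
  have hx_ge (m : ℕ) : t - (1 / 2) ^ m ≤ x m := by
    rw [le_div_iff₀ (by positivity), sub_mul, one_div_pow, one_div_mul_cancel (by positivity)]
    linarith [Nat.lt_floor_add_one (t * 2 ^ m)]
  have hx : Tendsto x atTop (𝓝 t) := by
    refine tendsto_of_tendsto_of_tendsto_of_le_of_le ?_ tendsto_const_nhds hx_ge hx_le
    simpa using tendsto_const_nhds.sub
      (tendsto_pow_atTop_nhds_zero_of_lt_one (by norm_num : (0 : ℝ) ≤ 1 / 2) (by norm_num))
  refine le_of_tendsto (((hf.tendsto t).comp hx).sub_const (f 0)).abs (.of_forall fun m => ?_)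
  have hfloor : ⌊t * 2 ^ m⌋₊ ≤ 2 ^ m :=
    Nat.floor_le_of_le (by push_cast; nlinarith [ht.2, pow_pos (two_pos : (0 : ℝ) < 2) m])
  exact (abs_sub_le_sum_of_dyadic_increments ha h m _ hfloor).trans
    (has.sum_le_tsum _ fun k _ => ha k)

end Chaining

lemma abs_le_mul_of_dyadic_block_increments {f : ℝ → ℝ} (hf : Continuous f) (h0 : f 0 = 0)
    {δ : ℝ} (hδ : 0 ≤ δ) {N : ℕ}
    (h : ∀ n ≥ N, ∀ k j : ℕ, j < 2 ^ k →
      |f (2 ^ n * ((j + 1) / 2 ^ k)) - f (2 ^ n * (j / 2 ^ k))| ≤ δ * 2 ^ n * (7 / 8) ^ k)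
    {s : ℝ} (hs : 2 ^ N ≤ s) : |f s| ≤ 16 * δ * s := by
  obtain ⟨p, hps, hsp⟩ := exists_nat_pow_near ((one_le_pow₀ one_le_two).trans hs) one_lt_two
  have hNp : N ≤ p + 1 := ((pow_lt_pow_iff_right₀ one_lt_two).1 (hs.trans_lt hsp)).le
  have hgeom : ∑' k : ℕ, δ * 2 ^ (p + 1) * (7 / 8 : ℝ) ^ k = 16 * δ * 2 ^ p := by
    rw [tsum_mul_left, tsum_geometric_of_lt_one (by norm_num) (by norm_num)]
    ring
  have hchain := abs_sub_le_tsum_of_dyadic_increments (f := fun t => f (2 ^ (p + 1) * t))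
    (by fun_prop) (fun k => by positivity)
    ((summable_geometric_of_lt_one (by norm_num) (by norm_num)).mul_left _) (h (p + 1) hNp)
    (t := s / 2 ^ (p + 1))
    ⟨div_nonneg ((by positivity : (0 : ℝ) ≤ 2 ^ N).trans hs) (by positivity),
      (div_le_one (by positivity)).2 hsp.le⟩
  simp only [mul_div_cancel₀ s (pow_ne_zero _ two_ne_zero), mul_zero, h0, sub_zero,
    hgeom] at hchain
  exact hchain.trans (by gcongr)

namespace IsStandardBM

variable {Ω : Type*} [MeasurableSpace Ω] {μ : Measure Ω} {B : ℝ → Ω → ℝ}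

lemma hasSubgaussianMGF_sub (hB : IsStandardBM μ B) {s t : ℝ} (hs : 0 ≤ s) (hst : s ≤ t) :
    HasSubgaussianMGF (fun ω => B t ω - B s ω) (t - s).toNNReal μ := by
  rw [← HasSubgaussianMGF.id_map_iff (X := fun ω => B t ω - B s ω)
    ((hB.meas t).sub (hB.meas s)).aemeasurable, hB.incr_law s t hs hst]
  exact hasSubgaussianMGF_id_gaussianReal _

lemma measureReal_abs_dyadic_increment_ge_le [IsFiniteMeasure μ] (hB : IsStandardBM μ B)
    {δ : ℝ} (hδ : 0 ≤ δ) (n k j : ℕ) :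
    μ.real {ω | δ * 2 ^ n * (7 / 8) ^ k ≤
        |B (2 ^ n * ((j + 1) / 2 ^ k)) ω - B (2 ^ n * (j / 2 ^ k)) ω|}
      ≤ 2 * exp (-(δ ^ 2 / 2 * 2 ^ n * (49 / 32) ^ k)) := by
  have hlen : 2 ^ n * ((j + 1) / 2 ^ k) - 2 ^ n * (j / 2 ^ k) = (2 : ℝ) ^ n / 2 ^ k := by ring
  have hsub := hB.hasSubgaussianMGF_sub (s := 2 ^ n * (j / 2 ^ k))
    (t := 2 ^ n * ((j + 1) / 2 ^ k)) (by positivity) (by rw [← sub_nonneg, hlen]; positivity)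
  refine (hsub.measureReal_abs_ge_le (by positivity)).trans_eq ?_
  have h4932 : (49 / 32 : ℝ) ^ k = ((7 / 8) ^ k) ^ 2 * 2 ^ k := by
    rw [← pow_mul, mul_comm k, pow_mul, ← mul_pow]
    norm_num
  rw [Real.coe_toNNReal _ (by rw [hlen]; positivity), hlen, h4932]
  congr 2
  field_simp

/- The ratio `7/8` keeps the thresholds `δ 2ⁿ (7/8)ᵏ` summable in `k`, while the union bound
over the `2ᵏ` increments of level `k` stays summable because `(2 (7/8)²)² = (49/32)² > 2`. -/
lemma ae_exists_forall_dyadic_increment_le [IsFiniteMeasure μ] (hB : IsStandardBM μ B) {δ : ℝ}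
    (hδ : 0 < δ) :
    ∀ᵐ ω ∂μ, ∃ N, ∀ n ≥ N, ∀ k j : ℕ, j < 2 ^ k →
      |B (2 ^ n * ((j + 1) / 2 ^ k)) ω - B (2 ^ n * (j / 2 ^ k)) ω| ≤ δ * 2 ^ n * (7 / 8) ^ k := by
  set E : ℕ × ℕ → Set Ω := fun p => ⋃ j ∈ Finset.range (2 ^ p.2),
    {ω | δ * 2 ^ p.1 * (7 / 8) ^ p.2 ≤
      |B (2 ^ p.1 * ((j + 1) / 2 ^ p.2)) ω - B (2 ^ p.1 * (j / 2 ^ p.2)) ω|}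
  have hE (p : ℕ × ℕ) :
      μ.real (E p) ≤ 2 * (2 ^ p.2 * exp (-(δ ^ 2 / 2 * 2 ^ p.1 * (49 / 32) ^ p.2))) := by
    refine (measureReal_biUnion_finset_le _ _).trans <| (Finset.sum_le_sum fun j _ =>
      hB.measureReal_abs_dyadic_increment_ge_le hδ.le p.1 p.2 j).trans_eq ?_
    simp only [Finset.sum_const, Finset.card_range, nsmul_eq_mul]
    push_cast
    ring
  have hsum := (summable_two_pow_mul_exp_neg_mul_two_pow_mul_pow (c := δ ^ 2 / 2)
    (ρ := 49 / 32) (by positivity) (by norm_num) (by norm_num)).mul_left 2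
  filter_upwards [ae_eventually_cofinite_notMem_of_summable hsum hE] with ω hω
  obtain ⟨N, hN⟩ := exists_forall_ge_of_eventually_cofinite_prod hω
  refine ⟨N, fun n hn k j hj => ?_⟩
  have hgood := hN n hn k
  simp only [E, mem_iUnion, mem_ofPred_eq, not_exists, not_le] at hgood
  exact (hgood j (Finset.mem_range.2 hj)).le

lemma ae_eventually_abs_le_mul [IsFiniteMeasure μ] (hB : IsStandardBM μ B) {ε : ℝ}
    (hε : 0 < ε) : ∀ᵐ ω ∂μ, ∀ᶠ s in atTop, |B s ω| ≤ ε * s := by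
  filter_upwards [hB.cont, hB.init, hB.ae_exists_forall_dyadic_increment_le (δ := ε / 16)
    (by positivity)] with ω hcont h0 ⟨N, hN⟩
  filter_upwards [eventually_ge_atTop (2 ^ N)] with s hs
  have := abs_le_mul_of_dyadic_block_increments hcont h0 (by positivity) hN hs
  rwa [mul_div_cancel₀ ε (by norm_num)] at this

lemma ae_isLittleO_id [IsFiniteMeasure μ] (hB : IsStandardBM μ B) :
    ∀ᵐ ω ∂μ, (fun s => B s ω) =o[atTop] id := by
  filter_upwards [ae_all_iff.2 fun n : ℕ =>
    hB.ae_eventually_abs_le_mul (ε := 1 / (n + 1)) (by positivity)] with ω hω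
  refine Asymptotics.isLittleO_iff_nat_mul_le.2 fun n => ?_
  filter_upwards [hω n, eventually_ge_atTop 0] with s hs hs0
  rw [Real.norm_eq_abs, Real.norm_eq_abs, id, abs_of_nonneg hs0]
  calc n * |B s ω| ≤ (n + 1) * |B s ω| := by gcongr; linarith
    _ ≤ (n + 1) * (1 / (n + 1) * s) := by gcongr
    _ = s := by field_simp

end IsStandardBM

lemma tendsto_bridge_of_isLittleO {α β γ W : ℝ → ℝ} {a b c : ℝ} {l : Filter ℝ}
    (hγ : Tendsto γ l atTop) (hβγ : Tendsto (fun t => β t * γ t) l (𝓝 1))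
    (hα : Tendsto α l (𝓝 a)) (hW : W =o[atTop] id) :
    Tendsto (fun t => α t + β t * ((b - a) * γ t + W (γ t) + c)) l (𝓝 b) := by
  have hγ0 : ∀ᶠ t in l, γ t ≠ 0 := hγ.eventually_ne_atTop 0
  have hβ : Tendsto β l (𝓝 0) := by
    have := hβγ.mul (tendsto_inv_atTop_zero.comp hγ)
    rw [one_mul] at this
    refine this.congr' ?_
    filter_upwards [hγ0] with t ht
    simp [ht]
  have hWγ : Tendsto (fun t => W (γ t) / γ t) l (𝓝 0) := hW.tendsto_div_nhds_zero.comp hγ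
  have hlim := hα.add ((hβγ.mul_const (b - a)).add ((hβγ.mul hWγ).add (hβ.mul_const c)))
  rw [show a + (1 * (b - a) + (1 * 0 + 0 * c)) = b by ring] at hlim
  refine hlim.congr' ?_
  filter_upwards [hγ0] with t ht
  field_simp
  ring

theorem GMB_pins_at_horizon_general
    {Ω : Type*} [MeasurableSpace Ω] (μ : Measure Ω) [IsProbabilityMeasure μ]
    (B : ℝ → Ω → ℝ) (hB : IsStandardBM μ B)
    (T x z : ℝ) (hT : 0 < T) (α β γ : ℝ → ℝ)
    (hγtop : Tendsto γ (nhdsWithin T (Iio T)) atTop)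
    (hβγ : Tendsto (fun t => β t * γ t) (nhdsWithin T (Iio T)) (nhds 1))
    (hα : ContinuousOn α (Icc 0 T))
    (X : ℝ → Ω → ℝ)
    (hX : ∀ t ∈ Ico (0 : ℝ) T, ∀ ω,
      X t ω = α t + β t * ((z - α T) * γ t + B (γ t) ω + (x - α 0) / β 0)) :
    ∀ᵐ ω ∂μ, Tendsto (fun t => X t ω) (nhdsWithin T (Iio T)) (nhds z) := by
  have hαT : Tendsto α (𝓝[<] T) (𝓝 (α T)) := by
    have := (hα T (right_mem_Icc.2 hT.le)).mono Ico_subset_Icc_self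
    rwa [ContinuousWithinAt, nhdsWithin_Ico_eq_nhdsLT hT] at this
  filter_upwards [hB.ae_isLittleO_id] with ω hω
  refine (tendsto_bridge_of_isLittleO (c := (x - α 0) / β 0) hγtop hβγ hαT hω).congr' ?_
  filter_upwards [Ico_mem_nhdsLT hT] with t ht
  rw [hX t ht ω]

/-- Pinning of the Brownian-motion representation of a Gauss–Markov bridge at
the horizon: `X_t = α(t) + β_T(t)((z−α(T))γ_T(t) + B_{γ_T(t)} + (x−α(0))/β_T(0))`
converges a.s. to `z` as `t → T⁻`. -/
theorem GMB_pins_at_horizon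
    {Ω : Type*} [MeasurableSpace Ω] (μ : Measure Ω) [IsProbabilityMeasure μ]
    (B : ℝ → Ω → ℝ) (hB : IsStandardBM μ B)
    (T x z : ℝ) (hT : 0 < T) (α β γ : ℝ → ℝ)
    (hβpos : ∀ t ∈ Ico (0 : ℝ) T, 0 < β t)
    (hγmono : StrictMonoOn γ (Ico 0 T)) (hγ0 : γ 0 = 0)
    (hγtop : Tendsto γ (nhdsWithin T (Iio T)) atTop)
    (hβγ : Tendsto (fun t => β t * γ t) (nhdsWithin T (Iio T)) (nhds 1))
    (hα : ContinuousOn α (Icc 0 T))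
    (X : ℝ → Ω → ℝ)
    (hX : ∀ t ∈ Ico (0 : ℝ) T, ∀ ω,
      X t ω = α t + β t * ((z - α T) * γ t + B (γ t) ω + (x - α 0) / β 0)) :
    ∀ᵐ ω ∂μ, Tendsto (fun t => X t ω) (nhdsWithin T (Iio T)) (nhds z) :=
  GMB_pins_at_horizon_general μ B hB T x z hT α β γ hγtop hβγ hα X hX
end
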